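/- In SL₃(ℝ), with x(a) = [[1,a,0],[0,1,0],[0,0,1]] and y(b) = [[1,0,0],[0,1,b],[0,0,1]] for a,b > 0, the images of the maps (a,b,c) ↦ x(a)y(b)x(c) and (a',b',c') ↦ y(a')x(b')y(c') from (ℝ_{>0})³ coincide. -/

import Mathlib

open Matrix

def xm (a : ℝ) : Matrix (Fin 3) (Fin 3) ℝ := !![1, a, 0; 0, 1, 0; 0, 0, 1]

def ym (b : ℝ) : Matrix (Fin 3) (Fin 3) ℝ := !![1, 0, 0; 0, 1, b; 0, 0, 1]

/-! Both `x(a) y(b) x(c)` and `y(a') x(b') y(c')` are unipotent upper triangular, with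
superdiagonal `(a + c, b)`, resp. `(b', a' + c')`, and corner entry `a b`, resp. `b' c'`. Matching
entries gives the transition map `(a, b, c) ↦ (b c / (a + c), a + c, a b / (a + c))`, which
preserves positivity. -/

theorem xm_mul_ym_mul_xm_eq (a b c : ℝ) :
    xm a * ym b * xm c = !![1, a + c, a * b; 0, 1, b; 0, 0, 1] := by
  ext i j
  fin_cases i <;> fin_cases j <;> simp [xm, ym, Matrix.mul_apply, Fin.sum_univ_succ, add_comm]

theorem ym_mul_xm_mul_ym_eq (a b c : ℝ) :
    ym a * xm b * ym c = !![1, b, b * c; 0, 1, a + c; 0, 0, 1] := by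
  ext i j
  fin_cases i <;> fin_cases j <;> simp [xm, ym, Matrix.mul_apply, Fin.sum_univ_succ, add_comm]

theorem xm_mul_ym_mul_xm {a c : ℝ} (b : ℝ) (h : a + c ≠ 0) :
    xm a * ym b * xm c = ym (b * c / (a + c)) * xm (a + c) * ym (a * b / (a + c)) := by
  rw [xm_mul_ym_mul_xm_eq, ym_mul_xm_mul_ym_eq]
  ext i j
  fin_cases i <;> fin_cases j <;> simp [field, add_comm]

theorem ym_mul_xm_mul_ym {a c : ℝ} (b : ℝ) (h : a + c ≠ 0) :
    ym a * xm b * ym c = xm (b * c / (a + c)) * ym (a + c) * xm (a * b / (a + c)) := by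
  rw [xm_mul_ym_mul_xm_eq, ym_mul_xm_mul_ym_eq]
  ext i j
  fin_cases i <;> fin_cases j <;> simp [field, add_comm]

/-- The two reduced-expression parametrizations of the top cell have the same
image: {x(a)y(b)x(c)} = {y(a')x(b')y(c')} over positive parameters. -/
theorem stmt_15 :
    {M : Matrix (Fin 3) (Fin 3) ℝ |
        ∃ a b c : ℝ, 0 < a ∧ 0 < b ∧ 0 < c ∧ M = xm a * ym b * xm c} =
    {M : Matrix (Fin 3) (Fin 3) ℝ |
        ∃ a b c : ℝ, 0 < a ∧ 0 < b ∧ 0 < c ∧ M = ym a * xm b * ym c} := by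
  ext M
  constructor
  · rintro ⟨a, b, c, ha, hb, hc, rfl⟩
    exact ⟨_, _, _, by positivity, by positivity, by positivity,
      xm_mul_ym_mul_xm b (by positivity)⟩
  · rintro ⟨a, b, c, ha, hb, hc, rfl⟩
    exact ⟨_, _, _, by positivity, by positivity, by positivity,
      ym_mul_xm_mul_ym b (by positivity)⟩
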